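/- Let X be a finite metric space and λΔ a simplex with #λΔ = #X and all non-zero distances equal to λ > 0. Then 2 d_GH(λΔ, X) = max{λ − ε(X), diam X − λ}, where ε(X) = min{|xy| : x ≠ y in X}. -/

import Mathlib

/-!
The simplex `S` and `X` are glued along a bijection `f : S ≃ X`; since every distance of `X`
lies in `[ε(X), diam X]`, the distortion of `f` is `max {λ − ε(X), diam X − λ}`, so the gluing
puts them at Hausdorff distance half of it. Conversely, if `S` and `X` sit inside a common space
at Hausdorff distance `r`, then two points of `X` at distance `diam X` are `2r`-close to two points
of `S`, whence `diam X ≤ λ + 2r`; and if `2r < λ`, choosing for every point of `S` an `r`-close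
point of `X` is injective, hence a bijection, so the two points of `X` at distance `ε(X)` are
`r`-close to two distinct points of `S`, whence `λ ≤ ε(X) + 2r`.
-/

open Metric

/-- The Gromov–Hausdorff distance between two (bounded) metric spaces: the
infimum of Hausdorff distances between the canonical copies of `X` and `Y`
inside their disjoint union, over all pseudometrics on the disjoint union
extending the metrics of `X` and of `Y`. -/
noncomputable def ghDist (X : Type*) (Y : Type*) [MetricSpace X] [MetricSpace Y] : ℝ :=
  sInf { r : ℝ | ∃ m : PseudoMetricSpace (X ⊕ Y),
    (∀ x x' : X, @Dist.dist _ m.toDist (Sum.inl x) (Sum.inl x') = dist x x') ∧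
    (∀ y y' : Y, @Dist.dist _ m.toDist (Sum.inr y) (Sum.inr y') = dist y y') ∧
    r = @Metric.hausdorffDist (X ⊕ Y) m
        (Set.range Sum.inl) (Set.range Sum.inr) }

open Set Function

theorem injective_of_forall_dist_lt {P S X : Type*} [PseudoMetricSpace P]
    [PseudoMetricSpace S] {i : S → P} {j : X → P} (hi : Isometry i) {g : S → X} {r l : ℝ}
    (hg : ∀ s, dist (i s) (j (g s)) < r) (hS : ∀ s s' : S, s ≠ s' → l ≤ dist s s')
    (hrl : 2 * r ≤ l) : Injective g := by
  intro s s' hss'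
  by_contra hne
  have hs := hg s
  rw [hss'] at hs
  have := dist_triangle (i s) (j (g s')) (i s')
  rw [hi.dist_eq, dist_comm (j (g s'))] at this
  linarith [hS s s' hne, hg s']

section HausdorffDist

variable {P S X : Type*} [PseudoMetricSpace P] [PseudoMetricSpace S] [PseudoMetricSpace X]
  {i : S → P} {j : X → P}

theorem dist_le_add_two_mul_hausdorffDist (hi : Isometry i) (hj : Isometry j)
    (hfin : hausdorffEDist (range i) (range j) ≠ ⊤) {l : ℝ}
    (hS : ∀ s s' : S, dist s s' ≤ l) (x y : X) :
    dist x y ≤ l + 2 * hausdorffDist (range i) (range j) := by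
  refine le_of_forall_pos_le_add fun δ hδ => ?_
  have hr : hausdorffDist (range i) (range j) < hausdorffDist (range i) (range j) + δ / 2 := by
    linarith
  obtain ⟨_, ⟨s, rfl⟩, hs⟩ := exists_dist_lt_of_hausdorffDist_lt' (mem_range_self x) hr hfin
  obtain ⟨_, ⟨s', rfl⟩, hs'⟩ := exists_dist_lt_of_hausdorffDist_lt' (mem_range_self y) hr hfin
  have := dist_triangle4 (j x) (i s) (i s') (j y)
  rw [hj.dist_eq, hi.dist_eq, dist_comm (j x)] at this
  linarith [hS s s']

theorem le_dist_add_two_mul_hausdorffDist [Finite X] (hi : Isometry i) (hj : Isometry j)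
    (hfin : hausdorffEDist (range i) (range j) ≠ ⊤) (hcard : Nat.card X ≤ Nat.card S)
    {l : ℝ} (hS : ∀ s s' : S, s ≠ s' → l ≤ dist s s') {x y : X} (hxy : x ≠ y) :
    l ≤ dist x y + 2 * hausdorffDist (range i) (range j) := by
  refine le_of_forall_pos_le_add fun δ hδ => ?_
  set r := hausdorffDist (range i) (range j) + δ / 2 with hr_def
  have hr : hausdorffDist (range i) (range j) < r := by linarith
  rcases le_or_gt l (2 * r) with hl | hl
  · linarith [dist_nonneg (x := x) (y := y)]
  have hnear : ∀ s, ∃ x, dist (i s) (j x) < r := fun s => by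
    obtain ⟨_, ⟨x, rfl⟩, hx⟩ := exists_dist_lt_of_hausdorffDist_lt (mem_range_self s) hr hfin
    exact ⟨x, hx⟩
  choose g hg using hnear
  have hbij := (injective_of_forall_dist_lt hi hg hS hl.le).bijective_of_nat_card_le hcard
  obtain ⟨s, rfl⟩ := hbij.2 x
  obtain ⟨s', rfl⟩ := hbij.2 y
  have := dist_triangle4 (i s) (j (g s)) (j (g s')) (i s')
  rw [hi.dist_eq, hj.dist_eq, dist_comm (j (g s'))] at this
  linarith [hS s s' (ne_of_apply_ne g hxy), hg s, hg s']

end HausdorffDist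

section GromovHausdorff

variable {X Y : Type*} [MetricSpace X] [MetricSpace Y]

theorem le_ghDist {c : ℝ}
    (h : ∀ m : PseudoMetricSpace (X ⊕ Y),
      (∀ x x' : X, @Dist.dist _ m.toDist (Sum.inl x) (Sum.inl x') = dist x x') →
      (∀ y y' : Y, @Dist.dist _ m.toDist (Sum.inr y) (Sum.inr y') = dist y y') →
      c ≤ @hausdorffDist (X ⊕ Y) m (range Sum.inl) (range Sum.inr)) :
    c ≤ ghDist X Y :=
  le_csInf ⟨_, metricSpaceSum.toPseudoMetricSpace, fun _ _ => rfl, fun _ _ => rfl, rfl⟩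
    (by rintro r ⟨m, hX, hY, rfl⟩; exact h m hX hY)

theorem ghDist_le_hausdorffDist (m : PseudoMetricSpace (X ⊕ Y))
    (hX : ∀ x x' : X, @Dist.dist _ m.toDist (Sum.inl x) (Sum.inl x') = dist x x')
    (hY : ∀ y y' : Y, @Dist.dist _ m.toDist (Sum.inr y) (Sum.inr y') = dist y y') :
    ghDist X Y ≤ @hausdorffDist (X ⊕ Y) m (range Sum.inl) (range Sum.inr) :=
  csInf_le ⟨0, by rintro r ⟨m, -, -, rfl⟩; exact hausdorffDist_nonneg⟩ ⟨m, hX, hY, rfl⟩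

theorem ghDist_le_of_forall_abs_dist_sub_le {Z : Type*} [Nonempty Z] {Φ : Z → X} {Ψ : Z → Y}
    (hΦ : Surjective Φ) (hΨ : Surjective Ψ) {ε : ℝ}
    (H : ∀ p q, |dist (Φ p) (Φ q) - dist (Ψ p) (Ψ q)| ≤ 2 * ε) :
    ghDist X Y ≤ ε := by
  have hε : 0 ≤ ε := by
    obtain ⟨p⟩ := ‹Nonempty Z›
    simpa using H p p
  -- `glueMetricApprox` only glues at a positive width, hence the detour through `ε + δ`.
  refine le_of_forall_pos_le_add fun δ hδ => ?_
  let m := glueMetricApprox Φ Ψ (ε + δ) (by linarith) fun p q => (H p q).trans (by linarith)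
  refine (ghDist_le_hausdorffDist m.toPseudoMetricSpace (fun _ _ => rfl) fun _ _ => rfl).trans ?_
  apply hausdorffDist_le_of_mem_dist (by linarith)
  · rintro _ ⟨x, rfl⟩
    obtain ⟨p, rfl⟩ := hΦ x
    exact ⟨_, mem_range_self (Ψ p), (glueDist_glued_points Φ Ψ _ p).le⟩
  · rintro _ ⟨y, rfl⟩
    obtain ⟨p, rfl⟩ := hΨ y
    refine ⟨_, mem_range_self (Φ p), ?_⟩
    rw [dist_comm]
    exact (glueDist_glued_points Φ Ψ _ p).le

end GromovHausdorff

noncomputable def minDist (X : Type*) [MetricSpace X] : ℝ :=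
  sInf {d : ℝ | ∃ x y : X, x ≠ y ∧ dist x y = d}

section MinDist

variable {X : Type*} [MetricSpace X] [Finite X]

theorem finite_setOf_dist_ne : {d : ℝ | ∃ x y : X, x ≠ y ∧ dist x y = d}.Finite :=
  (Set.finite_range fun p : X × X => dist p.1 p.2).subset
    (by rintro _ ⟨x, y, -, rfl⟩; exact ⟨(x, y), rfl⟩)

theorem minDist_le_dist {x y : X} (hxy : x ≠ y) : minDist X ≤ dist x y :=
  csInf_le finite_setOf_dist_ne.bddBelow ⟨x, y, hxy, rfl⟩

theorem exists_dist_eq_minDist [Nontrivial X] : ∃ x y : X, x ≠ y ∧ dist x y = minDist X :=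
  let ⟨x, y, hxy⟩ := exists_pair_ne X
  Set.Nonempty.csInf_mem (by exact ⟨dist x y, x, y, hxy, rfl⟩) finite_setOf_dist_ne

theorem minDist_le_diam [Nontrivial X] : minDist X ≤ diam (univ : Set X) := by
  obtain ⟨x, y, -, hxy⟩ := exists_dist_eq_minDist (X := X)
  exact hxy ▸ dist_le_diam_of_mem finite_univ.isBounded trivial trivial

end MinDist

section Simplex

variable {S X : Type*} [MetricSpace S] [MetricSpace X] [Finite X] [Nontrivial X] {l : ℝ}

theorem abs_dist_sub_dist_le_of_simplex (hsim : ∀ s s' : S, s ≠ s' → dist s s' = l)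
    {f : S → X} (hf : Injective f) (s t : S) :
    |dist s t - dist (f s) (f t)| ≤ max (l - minDist X) (diam (univ : Set X) - l) := by
  rcases eq_or_ne s t with rfl | hst
  · simp only [dist_self, sub_self, abs_zero]
    linarith [le_max_left (l - minDist X) (diam (univ : Set X) - l),
      le_max_right (l - minDist X) (diam (univ : Set X) - l), minDist_le_diam (X := X)]
  · rw [hsim s t hst, abs_sub_le_iff]
    constructor
    · linarith [le_max_left (l - minDist X) (diam (univ : Set X) - l),
        minDist_le_dist (hf.ne hst)]
    · linarith [le_max_right (l - minDist X) (diam (univ : Set X) - l),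
        dist_le_diam_of_mem finite_univ.isBounded (mem_univ (f s)) (mem_univ (f t))]

theorem ghDist_simplex_le [Nonempty S] (hsim : ∀ s s' : S, s ≠ s' → dist s s' = l) (f : S ≃ X) :
    ghDist S X ≤ max (l - minDist X) (diam (univ : Set X) - l) / 2 :=
  ghDist_le_of_forall_abs_dist_sub_le surjective_id f.surjective fun s t => by
    rw [mul_div_cancel₀ _ two_ne_zero]
    exact abs_dist_sub_dist_le_of_simplex hsim f.injective s t

theorem le_ghDist_simplex [Finite S] [Nonempty S] (hl : 0 ≤ l)
    (hsim : ∀ s s' : S, s ≠ s' → dist s s' = l) (hcard : Nat.card X ≤ Nat.card S) :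
    max (l - minDist X) (diam (univ : Set X) - l) / 2 ≤ ghDist S X := by
  refine le_ghDist fun m hSm hXm => ?_
  let _ := m
  have hi : Isometry (Sum.inl : S → S ⊕ X) := Isometry.of_dist_eq hSm
  have hj : Isometry (Sum.inr : X → S ⊕ X) := Isometry.of_dist_eq hXm
  have hfin : hausdorffEDist (range (Sum.inl : S → S ⊕ X)) (range Sum.inr) ≠ ⊤ :=
    hausdorffEDist_ne_top_of_nonempty_of_bounded (range_nonempty _) (range_nonempty _)
      (finite_range _).isBounded (finite_range _).isBounded
  obtain ⟨x, y, hxy, hmin⟩ := exists_dist_eq_minDist (X := X)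
  have hsep := le_dist_add_two_mul_hausdorffDist hi hj hfin hcard (fun s s' h => (hsim s s' h).ge)
    hxy
  have hdist := dist_le_add_two_mul_hausdorffDist hi hj hfin (l := l) fun s s' => by
    rcases eq_or_ne s s' with rfl | h
    · simpa using hl
    · exact (hsim s s' h).le
  have hdiam := diam_le_of_forall_dist_le (s := univ) (by linarith [hdist x x, dist_self x])
    fun x _ y _ => hdist x y
  rw [div_le_iff₀ two_pos]
  exact max_le (by linarith) (by linarith)

end Simplex

/-- If `X` is a finite metric space (with at least two points) and `S` is a
simplex of the same cardinality with all non-zero distances equal to `λ > 0`,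
then `2 d_GH(S, X) = max {λ − ε(X), diam X − λ}`, where `ε(X)` is the smallest
non-zero distance in `X`. -/
theorem two_ghDist_simplex_of_card_eq {X : Type*} [MetricSpace X] [Finite X]
    (htwo : ∃ x y : X, x ≠ y)
    (S : Type*) [MetricSpace S]
    (l : ℝ) (hl : 0 < l)
    (hsim : ∀ s s' : S, s ≠ s' → dist s s' = l)
    (hcard : Nat.card S = Nat.card X) :
    2 * ghDist S X =
      max (l - sInf {d : ℝ | ∃ x y : X, x ≠ y ∧ dist x y = d})
          (diam (Set.univ : Set X) - l) := by
  obtain ⟨x, y, hxy⟩ := htwo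
  have : Nontrivial X := ⟨⟨x, y, hxy⟩⟩
  have : Finite S := Nat.finite_of_card_ne_zero (hcard ▸ Nat.card_pos.ne')
  have : Nonempty S := Finite.card_pos_iff.mp (hcard ▸ Nat.card_pos)
  obtain ⟨f⟩ := Finite.card_eq.mp hcard
  change 2 * ghDist S X = max (l - minDist X) (diam (univ : Set X) - l)
  linarith [ghDist_simplex_le hsim f, le_ghDist_simplex hl.le hsim hcard.ge]
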